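/- Let ψ : ℝ^M → ℂ^D be a differentiable family of unit vectors, fix θ* ∈ ℝ^M, and let 0 < t ≤ 1. Define the Kraus operator K = (t − 1)·ψ(θ*)ψ(θ*)† + I, so that F = K†K = (t² − 1)·ψ(θ*)ψ(θ*)† + I, and set p(θ) = ⟨ψ(θ), F ψ(θ)⟩ and ψ^{ps}(θ) = K ψ(θ)/√(p(θ)). Then the postselection probability at θ* is p(θ*) = t², and the postselected pure-state QFIM at θ* satisfies, for all i, j: 𝓘_{ij}(θ* | ψ^{ps}) = (1/t²) · 𝓘_{ij}(θ* | ψ). -/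

import Mathlib

/-!
`K` scales `ψ(θ*)` by `t` and fixes its orthogonal complement, so `F = K†K = I + (t² − 1)P`
and `p(θ) = 1 + (t² − 1)|⟨ψ(θ*), ψ(θ)⟩|²`. By Cauchy–Schwarz the overlap
`|⟨ψ(θ*), ψ(θ)⟩|²` is maximal at `θ*`, so `p` is stationary there and
`∂ψ^{ps}(θ*) = t⁻¹ K ∂ψ(θ*)`. The quantum geometric tensor `⟨a, b⟩ − ⟨a, ψ⟩⟨ψ, b⟩` at
`ψ(θ*)` is invariant under `a, b ↦ Ka, Kb`, which leaves only the factor `t⁻²`.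
-/

noncomputable section

open Matrix

/-- Standard Hermitian inner product on `ℂ^D`, conjugate-linear in the first argument. -/
def dotc {D : ℕ} (x y : Fin D → ℂ) : ℂ := ∑ d, starRingEnd ℂ (x d) * y d

/-- Partial derivative of a parametrized family with respect to the `i`-th parameter. -/
def pder {M D : ℕ} (i : Fin M) (φ : (Fin M → ℝ) → (Fin D → ℂ)) (θ : Fin M → ℝ) :
    Fin D → ℂ :=
  fderiv ℝ φ θ (Pi.single i 1)

/-- Pure-state quantum Fisher information matrix entry
`𝓘_{ij}(θ|φ) = 4 Re[⟨∂_iφ,∂_jφ⟩ − ⟨∂_iφ,φ⟩⟨φ,∂_jφ⟩]`. -/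
def qfim {M D : ℕ} (φ : (Fin M → ℝ) → (Fin D → ℂ)) (θ : Fin M → ℝ) (i j : Fin M) : ℝ :=
  4 * (dotc (pder i φ θ) (pder j φ θ) -
        dotc (pder i φ θ) (φ θ) * dotc (φ θ) (pder j φ θ)).re

theorem star_kraus_mul_kraus {𝕜 A : Type*} [RCLike 𝕜] [Ring A] [StarRing A] [Algebra 𝕜 A]
    [StarModule 𝕜 A] {P : A} (hP : IsSelfAdjoint P) (hPP : IsIdempotentElem P) (t : ℝ) :
    star (((t : 𝕜) - 1) • P + 1) * (((t : 𝕜) - 1) • P + 1) = ((t : 𝕜) ^ 2 - 1) • P + 1 := by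
  have hs : star ((t : 𝕜) - 1) = (t : 𝕜) - 1 := by simp [RCLike.star_def]
  rw [star_add, star_smul, hs, hP.star_eq, star_one, add_mul, mul_add, mul_add, smul_mul_smul,
    hPP.eq, mul_one, one_mul, one_mul]
  module

section Dotc

variable {D : ℕ}

theorem dotc_eq_dotProduct (x y : Fin D → ℂ) : dotc x y = star x ⬝ᵥ y := rfl

theorem dotc_add_right (x y z : Fin D → ℂ) : dotc x (y + z) = dotc x y + dotc x z :=
  dotProduct_add _ _ _

theorem dotc_add_left (x y z : Fin D → ℂ) : dotc (x + y) z = dotc x z + dotc y z := by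
  simp only [dotc_eq_dotProduct, star_add, add_dotProduct]

theorem dotc_smul_right (c : ℂ) (x y : Fin D → ℂ) : dotc x (c • y) = c * dotc x y :=
  dotProduct_smul _ _ _

theorem dotc_smul_left (c : ℂ) (x y : Fin D → ℂ) :
    dotc (c • x) y = starRingEnd ℂ c * dotc x y := by
  simp only [dotc_eq_dotProduct, star_smul, smul_dotProduct, smul_eq_mul, Complex.star_def]

theorem conj_dotc (x y : Fin D → ℂ) : starRingEnd ℂ (dotc x y) = dotc y x := by
  simp [dotc, map_sum, mul_comm]

theorem dotc_eq_inner (x y : Fin D → ℂ) :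
    dotc x y = inner ℂ (WithLp.toLp 2 x : EuclideanSpace ℂ (Fin D)) (WithLp.toLp 2 y) := by
  rw [EuclideanSpace.inner_toLp_toLp, dotProduct_comm]; rfl

theorem normSq_dotc_le (x y : Fin D → ℂ) :
    Complex.normSq (dotc x y) ≤ (dotc x x).re * (dotc y y).re := by
  have h := inner_mul_inner_self_le (𝕜 := ℂ) (WithLp.toLp 2 x : EuclideanSpace ℂ (Fin D))
    (WithLp.toLp 2 y)
  simp only [← dotc_eq_inner] at h
  rwa [← conj_dotc x y, Complex.norm_conj, ← sq, ← Complex.normSq_eq_norm_sq] at h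

theorem vecMulVec_star_mulVec (v x : Fin D → ℂ) : vecMulVec v (star v) *ᵥ x = dotc v x • v := by
  ext d
  simp [mulVec, dotProduct, vecMulVec_apply, dotc, Finset.mul_sum, mul_comm, mul_left_comm]

theorem smul_vecMulVec_add_one_mulVec (c : ℂ) (v x : Fin D → ℂ) :
    (c • vecMulVec v (star v) + 1) *ᵥ x = x + (c * dotc v x) • v := by
  rw [add_mulVec, smul_mulVec, one_mulVec, vecMulVec_star_mulVec, smul_smul, add_comm]

theorem isSelfAdjoint_vecMulVec_star (v : Fin D → ℂ) :
    IsSelfAdjoint (vecMulVec v (star v)) := by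
  ext i j
  simp [vecMulVec_apply, mul_comm]

theorem isIdempotentElem_vecMulVec_star {v : Fin D → ℂ} (hv : dotc v v = 1) :
    IsIdempotentElem (vecMulVec v (star v)) := by
  rw [IsIdempotentElem, vecMulVec_mul_vecMulVec, ← dotc_eq_dotProduct, hv, one_smul]

theorem dotc_smul_vecMulVec_add_one_mulVec_self (c : ℂ) (v x : Fin D → ℂ) :
    dotc x ((c • vecMulVec v (star v) + 1) *ᵥ x) =
      dotc x x + c * Complex.normSq (dotc v x) := by
  rw [smul_vecMulVec_add_one_mulVec, dotc_add_right, dotc_smul_right, ← conj_dotc v x, mul_assoc,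
    Complex.mul_conj]

theorem smul_vecMulVec_add_one_mulVec_self {v : Fin D → ℂ} (hv : dotc v v = 1) (c : ℂ) :
    (c • vecMulVec v (star v) + 1) *ᵥ v = (c + 1) • v := by
  rw [smul_vecMulVec_add_one_mulVec, hv, mul_one, add_smul, one_smul, add_comm]

def quantumGeometricTensor (v a b : Fin D → ℂ) : ℂ := dotc a b - dotc a v * dotc v b

theorem qfim_eq_re_quantumGeometricTensor {M : ℕ} (φ : (Fin M → ℝ) → Fin D → ℂ)
    (θ : Fin M → ℝ) (i j : Fin M) :
    qfim φ θ i j = 4 * (quantumGeometricTensor (φ θ) (pder i φ θ) (pder j φ θ)).re := rfl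

theorem quantumGeometricTensor_real_smul (r : ℝ) (v a b : Fin D → ℂ) :
    quantumGeometricTensor v (r • a) (r • b) =
      ((r ^ 2 : ℝ) : ℂ) * quantumGeometricTensor v a b := by
  simp only [quantumGeometricTensor, ← Complex.coe_smul, dotc_smul_left, dotc_smul_right,
    Complex.conj_ofReal]
  push_cast
  ring

theorem quantumGeometricTensor_kraus_mulVec {v : Fin D → ℂ} (hv : dotc v v = 1) (t : ℝ)
    (a b : Fin D → ℂ) :
    quantumGeometricTensor v ((((t : ℂ) - 1) • vecMulVec v (star v) + 1) *ᵥ a)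
      ((((t : ℂ) - 1) • vecMulVec v (star v) + 1) *ᵥ b) = quantumGeometricTensor v a b := by
  have hs : starRingEnd ℂ ((t : ℂ) - 1) = (t : ℂ) - 1 := by simp
  simp only [quantumGeometricTensor, smul_vecMulVec_add_one_mulVec, dotc_add_left,
    dotc_add_right, dotc_smul_left, dotc_smul_right, map_mul, hs, conj_dotc, hv]
  ring

end Dotc

section Calculus

variable {E : Type*} [NormedAddCommGroup E] [NormedSpace ℝ E]

theorem HasFDerivAt.matrix_mulVec {m n : Type*} [Fintype m] [Fintype n] {f : E → n → ℂ}
    {f' : E →L[ℝ] n → ℂ} {x : E} (A : Matrix m n ℂ) (hf : HasFDerivAt f f' x) :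
    HasFDerivAt (fun y => A *ᵥ f y)
      (((mulVecLin A).restrictScalars ℝ).toContinuousLinearMap ∘L f') x :=
  (((mulVecLin A).restrictScalars ℝ).toContinuousLinearMap.hasFDerivAt).comp x hf

theorem DifferentiableAt.dotc {D : ℕ} {f g : E → Fin D → ℂ} {x : E}
    (hf : DifferentiableAt ℝ f x) (hg : DifferentiableAt ℝ g x) :
    DifferentiableAt ℝ (fun y => dotc (f y) (g y)) x := by
  unfold _root_.dotc
  fun_prop

theorem hasFDerivAt_normSq_dotc_eq_zero {D : ℕ} {ψ : E → Fin D → ℂ}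
    (hunit : ∀ θ, dotc (ψ θ) (ψ θ) = 1) {θ₀ : E} (hψ : DifferentiableAt ℝ ψ θ₀) :
    HasFDerivAt (fun θ => Complex.normSq (dotc (ψ θ₀) (ψ θ))) (0 : E →L[ℝ] ℝ) θ₀ := by
  have hmax : IsMaxOn (fun θ => Complex.normSq (dotc (ψ θ₀) (ψ θ))) Set.univ θ₀ := fun θ _ => by
    simpa [hunit] using normSq_dotc_le (ψ θ₀) (ψ θ)
  have hdiff : DifferentiableAt ℝ (fun θ => Complex.normSq (dotc (ψ θ₀) (ψ θ))) θ₀ := by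
    simp_rw [Complex.normSq_eq_norm_sq]
    exact ((differentiableAt_const _).dotc hψ).norm_sq ℝ
  simpa [(hmax.isLocalMax Filter.univ_mem).fderiv_eq_zero] using hdiff.hasFDerivAt

theorem hasFDerivAt_inv_sqrt_of_hasFDerivAt_zero {p : E → ℝ} {x : E}
    (hp : HasFDerivAt p (0 : E →L[ℝ] ℝ) x) (hpos : 0 < p x) :
    HasFDerivAt (fun y => (√(p y))⁻¹) (0 : E →L[ℝ] ℝ) x := by
  simpa [Function.comp_def] using
    ((Real.hasDerivAt_sqrt hpos.ne').inv (Real.sqrt_pos.2 hpos).ne').comp_hasFDerivAt x hp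

theorem pder_smul_mulVec_of_hasFDerivAt_zero {M D : ℕ} {g : (Fin M → ℝ) → ℝ}
    {φ : (Fin M → ℝ) → Fin D → ℂ} {θ : Fin M → ℝ}
    (hg : HasFDerivAt g (0 : (Fin M → ℝ) →L[ℝ] ℝ) θ) (hφ : DifferentiableAt ℝ φ θ)
    (A : Matrix (Fin D) (Fin D) ℂ) (i : Fin M) :
    pder i (fun θ' => g θ' • A *ᵥ φ θ') θ = g θ • A *ᵥ pder i φ θ := by
  rw [pder, (hg.fun_smul (hφ.hasFDerivAt.matrix_mulVec A)).fderiv]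
  simp [pder]

end Calculus

theorem distilled_qfim_amplification_general
    (M D : ℕ) (ψ : (Fin M → ℝ) → (Fin D → ℂ))
    (hψ : Differentiable ℝ ψ)
    (hunit : ∀ θ, dotc (ψ θ) (ψ θ) = 1)
    (θstar : Fin M → ℝ) (t : ℝ) (ht0 : 0 < t)
    (P : Matrix (Fin D) (Fin D) ℂ)
    (hP : P = vecMulVec (ψ θstar) (star (ψ θstar)))
    (K : Matrix (Fin D) (Fin D) ℂ)
    (hK : K = ((t : ℂ) - 1) • P + 1)
    (F : Matrix (Fin D) (Fin D) ℂ) (hF : F = Kᴴ * K)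
    (p : (Fin M → ℝ) → ℝ)
    (hp : ∀ θ, p θ = (dotc (ψ θ) (F.mulVec (ψ θ))).re)
    (ψps : (Fin M → ℝ) → (Fin D → ℂ))
    (hψps : ∀ θ', ψps θ' = (Real.sqrt (p θ'))⁻¹ • K.mulVec (ψ θ')) :
    F = (((t : ℂ) ^ 2 - 1) • P + 1) ∧
    p θstar = t ^ 2 ∧
    ∀ i j, qfim ψps θstar i j = (1 / t ^ 2) * qfim ψ θstar i j := by
  have hv := hunit θstar
  have hFP : F = ((t : ℂ) ^ 2 - 1) • P + 1 := by
    rw [hF, hK, ← star_eq_conjTranspose, hP]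
    exact star_kraus_mul_kraus (isSelfAdjoint_vecMulVec_star _)
      (isIdempotentElem_vecMulVec_star hv) t
  have hp_eq : p = fun θ => 1 + (t ^ 2 - 1) * Complex.normSq (dotc (ψ θstar) (ψ θ)) := by
    ext θ
    rw [hp, hFP, hP, dotc_smul_vecMulVec_add_one_mulVec_self, hunit]
    simp [← Complex.ofReal_pow]
  have hpθ : p θstar = t ^ 2 := by
    simp only [hp_eq, hv, Complex.normSq_one]
    ring
  have hsqrt : √(p θstar) = t := by rw [hpθ, Real.sqrt_sq ht0.le]
  have hp_crit : HasFDerivAt p (0 : (Fin M → ℝ) →L[ℝ] ℝ) θstar := by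
    rw [hp_eq]
    simpa using
      ((hasFDerivAt_normSq_dotc_eq_zero hunit (hψ θstar)).const_mul (t ^ 2 - 1)).const_add 1
  have hψps_star : ψps θstar = ψ θstar := by
    rw [hψps, hsqrt, hK, hP, smul_vecMulVec_add_one_mulVec_self hv, sub_add_cancel,
      Complex.coe_smul, inv_smul_smul₀ ht0.ne']
  have hpder : ∀ i, pder i ψps θstar = t⁻¹ • K *ᵥ pder i ψ θstar := fun i => by
    have hnorm_crit := hasFDerivAt_inv_sqrt_of_hasFDerivAt_zero hp_crit (hpθ ▸ by positivity)
    rw [funext hψps, pder_smul_mulVec_of_hasFDerivAt_zero hnorm_crit (hψ θstar), hsqrt]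
  refine ⟨hFP, hpθ, fun i j => ?_⟩
  rw [qfim_eq_re_quantumGeometricTensor, qfim_eq_re_quantumGeometricTensor, hψps_star, hpder,
    hpder, quantumGeometricTensor_real_smul, hK, hP, quantumGeometricTensor_kraus_mulVec hv,
    Complex.re_ofReal_mul]
  field_simp

/-- **Theorem 2 of the paper (exact, δ = 0 case).** With the Kraus operator
`K = (t−1)|ψ(θ*)⟩⟨ψ(θ*)| + I`, the postselection probability at `θ*` is `t²`,
`F = K†K = (t²−1)|ψ(θ*)⟩⟨ψ(θ*)| + I`, and the postselected QFIM at `θ*` is the original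
QFIM amplified by the factor `1/t²`. -/
theorem distilled_qfim_amplification
    (M D : ℕ) (ψ : (Fin M → ℝ) → (Fin D → ℂ))
    (hψ : Differentiable ℝ ψ)
    (hunit : ∀ θ, dotc (ψ θ) (ψ θ) = 1)
    (θstar : Fin M → ℝ) (t : ℝ) (ht0 : 0 < t) (ht1 : t ≤ 1)
    (P : Matrix (Fin D) (Fin D) ℂ)
    (hP : P = vecMulVec (ψ θstar) (star (ψ θstar)))
    (K : Matrix (Fin D) (Fin D) ℂ)
    (hK : K = ((t : ℂ) - 1) • P + 1)
    (F : Matrix (Fin D) (Fin D) ℂ) (hF : F = Kᴴ * K)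
    (p : (Fin M → ℝ) → ℝ)
    (hp : ∀ θ, p θ = (dotc (ψ θ) (F.mulVec (ψ θ))).re)
    (ψps : (Fin M → ℝ) → (Fin D → ℂ))
    (hψps : ∀ θ', ψps θ' = (Real.sqrt (p θ'))⁻¹ • K.mulVec (ψ θ')) :
    F = (((t : ℂ) ^ 2 - 1) • P + 1) ∧
    p θstar = t ^ 2 ∧
    ∀ i j, qfim ψps θstar i j = (1 / t ^ 2) * qfim ψ θstar i j :=
  distilled_qfim_amplification_general M D ψ hψ hunit θstar t ht0 P hP K hK F hF p hp ψps hψps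

end
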